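/- Let α > 2, n ≥ 3, P > 0. If R = 80·(256/(α−2))^{1/(α−2)}·(log n)^{α/(2(α−2))}, then P·(80√(log n))^{−α} / (P·R^{2−α}/(25(α−2)·log n)) ≥ log n; i.e., the SINR at a receiver at distance at most 80√(log n) from its transmitter with total interference at most P·R^{2−α}/(25(α−2) log n) is at least log n. -/

import Mathlib

/-!
With `L = log n`, the chosen `R` makes `R^(2-α) = 80^(2-α) (α-2)/256 · L^(-α/2)`, the same power
of `L` as in the signal `(80 √L)^(-α)`. These powers cancel, and the SINR is exactly
`25 · 256 / 80² · L = L`.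
-/

open Real

lemma mul_sqrt_rpow_neg {c L : ℝ} (hc : 0 ≤ c) (hL : 0 ≤ L) (α : ℝ) :
    (c * √L) ^ (-α) = c ^ (-α) * L ^ (-(α / 2)) := by
  rw [mul_rpow hc (sqrt_nonneg _), sqrt_eq_rpow, ← rpow_mul hL]
  ring_nf

lemma mul_rpow_inv_sub_two_mul_rpow_rpow_two_sub {α c K L : ℝ} (hα : 2 < α) (hc : 0 ≤ c)
    (hK : 0 ≤ K) (hL : 0 ≤ L) :
    (c * K ^ (1 / (α - 2)) * L ^ (α / (2 * (α - 2)))) ^ (2 - α) =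
      c ^ (2 - α) * K⁻¹ * L ^ (-(α / 2)) := by
  have hα₂ : α - 2 ≠ 0 := by linarith
  have hK_exp : 1 / (α - 2) * (2 - α) = -1 := by field_simp; ring
  have hL_exp : α / (2 * (α - 2)) * (2 - α) = -(α / 2) := by field_simp; ring
  rw [mul_rpow (by positivity) (by positivity), mul_rpow hc (by positivity),
    ← rpow_mul hK, ← rpow_mul hL, hK_exp, hL_exp, rpow_neg_one]

theorem sinr_eq {α c B K L P : ℝ} (hα : 2 < α) (hc : 0 < c) (hK : 0 < K) (hL : 0 < L)
    (hP : P ≠ 0) (hB : B ≠ 0) :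
    P * (c * √L) ^ (-α) /
        (P * (c * (K / (α - 2)) ^ (1 / (α - 2)) * L ^ (α / (2 * (α - 2)))) ^ (2 - α) /
          (B * (α - 2) * L)) = B * K / c ^ 2 * L := by
  have hα₂ : 0 < α - 2 := by linarith
  rw [mul_sqrt_rpow_neg hc.le hL.le,
    mul_rpow_inv_sub_two_mul_rpow_rpow_two_sub hα hc.le (by positivity) hL.le,
    show 2 - α = 2 + -α by ring, rpow_add hc, rpow_two]
  have hcα : c ^ (-α) ≠ 0 := (rpow_pos_of_pos hc _).ne'
  have hLα : L ^ (-(α / 2)) ≠ 0 := (rpow_pos_of_pos hL _).ne'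
  field_simp

theorem stmt_17 (α n P R : ℝ) (hα : 2 < α) (hn : 3 ≤ n) (hP : 0 < P)
    (hR : R = 80 * (256 / (α - 2)) ^ (1 / (α - 2)) *
        Real.log n ^ (α / (2 * (α - 2)))) :
    P * (80 * Real.sqrt (Real.log n)) ^ (-α) /
        (P * R ^ (2 - α) / (25 * (α - 2) * Real.log n)) ≥ Real.log n := by
  have hlog : 0 < Real.log n := Real.log_pos (by linarith)
  rw [hR, sinr_eq hα (by norm_num) (by norm_num) hlog hP.ne' (by norm_num)]
  norm_num
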